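/- Soundness of polarized subtyping for call-by-value: for call-by-value type names t, u and their Levy translations [t]_V, [u]_V into positive CBPV type names, (1) if [t]_V empty (CBPV emptiness) then t empty (CBV emptiness), and (2) if [t]_V ≤ [u]_V (CBPV positive subtyping) then t ≤ u (CBV subtyping). -/

import Mathlib

namespace CBPV

abbrev Label := String
abbrev Var := String

-- Positive types (values); `name` refers to an equirecursively defined type name.
mutual
inductive PosTp : Type where
  | name : String → PosTp
  | str  : PosStr → PosTp

/-- Structural positive types. -/
inductive PosStr : Type where
  | tensor : PosTp → PosTp → PosStr
  | one    : PosStr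
  | plus   : List (Label × PosTp) → PosStr
  | down   : NegTp → PosStr

/-- Negative types (computations). -/
inductive NegTp : Type where
  | name : String → NegTp
  | str  : NegStr → NegTp

/-- Structural negative types. -/
inductive NegStr : Type where
  | arrow   : PosTp → NegTp → NegStr
  | withRec : List (Label × NegTp) → NegStr
  | up      : PosTp → NegStr
end

mutual
/-- Values. -/
inductive Val : Type where
  | var   : Var → Val
  | pair  : Val → Val → Val
  | unit  : Val
  | inj   : Label → Val → Val
  | thunk : Comp → Val

/-- Computations. -/
inductive Comp : Type where
  | lam       : Var → Comp → Comp
  | app       : Comp → Val → Comp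
  | record    : List (Label × Comp) → Comp
  | proj      : Comp → Label → Comp
  | ret       : Val → Comp
  | letret    : Var → Comp → Comp → Comp
  | name      : String → Comp
  | matchPair : Val → Var → Var → Comp → Comp
  | matchUnit : Val → Comp → Comp
  | matchSum  : Val → List (Label × Var × Comp) → Comp
  | force     : Val → Comp
end

/-- A global signature: equirecursive (contractive) type definitions `t = τ⁺`,
`s = σ⁻`, and recursive expression definitions `f : σ⁻ = e`. -/
structure Signature : Type where
  pos  : String → PosStr
  neg  : String → NegStr
  defs : String → NegTp × Comp

mutual
/-- Substitution of value `w` for variable `x` in a value. -/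
def substV (w : Val) (x : Var) : Val → Val
  | .var y => if y = x then w else .var y
  | .pair v₁ v₂ => .pair (substV w x v₁) (substV w x v₂)
  | .unit => .unit
  | .inj j v => .inj j (substV w x v)
  | .thunk e => .thunk (substC w x e)

/-- Substitution of value `w` for variable `x` in a computation. -/
def substC (w : Val) (x : Var) : Comp → Comp
  | .lam y e => .lam y (if y = x then e else substC w x e)
  | .app e v => .app (substC w x e) (substV w x v)
  | .record L => .record (substRec w x L)
  | .proj e j => .proj (substC w x e) j
  | .ret v => .ret (substV w x v)
  | .letret y e₁ e₂ => .letret y (substC w x e₁) (if y = x then e₂ else substC w x e₂)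
  | .name f => .name f
  | .matchPair v y z e =>
      .matchPair (substV w x v) y z (if y = x ∨ z = x then e else substC w x e)
  | .matchUnit v e => .matchUnit (substV w x v) (substC w x e)
  | .matchSum v B => .matchSum (substV w x v) (substBr w x B)
  | .force v => .force (substV w x v)

def substRec (w : Val) (x : Var) : List (Label × Comp) → List (Label × Comp)
  | [] => []
  | (l, e) :: rest => (l, substC w x e) :: substRec w x rest

def substBr (w : Val) (x : Var) : List (Label × Var × Comp) → List (Label × Var × Comp)
  | [] => []
  | (l, y, e) :: rest =>
      (l, y, if y = x then e else substC w x e) :: substBr w x rest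
end

/-- Terminal computations. -/
inductive Terminal : Comp → Prop where
  | lam    : Terminal (.lam x e)
  | record : Terminal (.record L)
  | ret    : Terminal (.ret v)

/-- Small-step dynamics of call-by-push-value, relative to a signature. -/
inductive Step (Sg : Signature) : Comp → Comp → Prop where
  | beta       : Step Sg (.app (.lam x e) v) (substC v x e)
  | app        : Step Sg e e' → Step Sg (.app e v) (.app e' v)
  | letretBeta : Step Sg (.letret x (.ret v) e₂) (substC v x e₂)
  | letretStep : Step Sg e₁ e₁' → Step Sg (.letret x e₁ e₂) (.letret x e₁' e₂)
  | projBeta   : L.lookup j = some e → Step Sg (.proj (.record L) j) e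
  | projStep   : Step Sg e e' → Step Sg (.proj e j) (.proj e' j)
  | matchPair  : Step Sg (.matchPair (.pair v₁ v₂) x y e) (substC v₁ x (substC v₂ y e))
  | matchUnit  : Step Sg (.matchUnit .unit e) e
  | matchSum   : B.lookup j = some (x, ej) → Step Sg (.matchSum (.inj j v) B) (substC v x ej)
  | force      : Step Sg (.force (.thunk e)) e
  | name       : Sg.defs f = (σ, e) → Step Sg (.name f) e

end CBPV

namespace CBPV

def PosTp.IsName : PosTp → Prop := fun τ => ∃ t, τ = .name t
def NegTp.IsName : NegTp → Prop := fun σ => ∃ s, σ = .name s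

/-- A structural positive type is in normal form if all of its components are
type names, and its label lists have no duplicate labels. -/
def PosStrNormal : PosStr → Prop
  | .tensor τ₁ τ₂ => τ₁.IsName ∧ τ₂.IsName
  | .one => True
  | .plus L => (∀ p ∈ L, (Prod.snd p).IsName) ∧ (L.map Prod.fst).Nodup
  | .down σ => σ.IsName

def NegStrNormal : NegStr → Prop
  | .arrow τ σ => τ.IsName ∧ σ.IsName
  | .withRec L => (∀ p ∈ L, (Prod.snd p).IsName) ∧ (L.map Prod.fst).Nodup
  | .up τ => τ.IsName

/-- A signature is in normal form when every type definition alternates between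
type names and structural types, i.e. the components of every defined
structural type are themselves type names. -/
def SigNormal (Sg : Signature) : Prop :=
  (∀ t, PosStrNormal (Sg.pos t)) ∧ (∀ s, NegStrNormal (Sg.neg s))

/-- One unfolding of the rules for the emptiness judgment `t empty`. -/
def EmptyUnf (Sg : Signature) (S : String → Prop) (t : String) : Prop :=
  (∃ L, Sg.pos t = .plus L ∧
     ∀ p ∈ L, ∃ tj, Prod.snd p = PosTp.name tj ∧ S tj) ∨
  (∃ t₁ t₂, Sg.pos t = .tensor (.name t₁) (.name t₂) ∧ (S t₁ ∨ S t₂))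

/-- `t empty`: the greatest fixed point (circular derivations) of the
emptiness rules. -/
def TpEmpty (Sg : Signature) (t : String) : Prop :=
  ∃ S : String → Prop, (∀ u, S u → EmptyUnf Sg S u) ∧ S t

/-- `s full`: `s = t₁ → s₂ ∈ Σ` with `t₁ empty`, or `s = &{} ∈ Σ`. -/
def TpFull (Sg : Signature) (s : String) : Prop :=
  (∃ t₁ s₂, Sg.neg s = .arrow (.name t₁) (.name s₂) ∧ TpEmpty Sg t₁) ∨
  Sg.neg s = .withRec []

/-- One unfolding of the rules for positive subtyping `t ≤ u` between
positive type names. -/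
def PosSubUnf (Sg : Signature) (P N : String → String → Prop) (t u : String) : Prop :=
  (∃ t₁ t₂ u₁ u₂, Sg.pos t = .tensor (.name t₁) (.name t₂) ∧
     Sg.pos u = .tensor (.name u₁) (.name u₂) ∧ P t₁ u₁ ∧ P t₂ u₂) ∨
  (Sg.pos t = .one ∧ Sg.pos u = .one) ∨
  (∃ L K, Sg.pos t = .plus L ∧ Sg.pos u = .plus K ∧
     ∀ p ∈ L, ∃ tj, Prod.snd p = PosTp.name tj ∧
       (TpEmpty Sg tj ∨ ∃ uj, K.lookup (Prod.fst p) = some (PosTp.name uj) ∧ P tj uj)) ∨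
  (∃ s r, Sg.pos t = .down (.name s) ∧ Sg.pos u = .down (.name r) ∧ N s r) ∨
  TpEmpty Sg t

/-- One unfolding of the rules for negative subtyping `s ≤ r` between
negative type names. -/
def NegSubUnf (Sg : Signature) (P N : String → String → Prop) (s r : String) : Prop :=
  (∃ t₁ s₂ u₁ r₂, Sg.neg s = .arrow (.name t₁) (.name s₂) ∧
     Sg.neg r = .arrow (.name u₁) (.name r₂) ∧ P u₁ t₁ ∧ N s₂ r₂) ∨
  (∃ t u, Sg.neg s = .up (.name t) ∧ Sg.neg r = .up (.name u) ∧ P t u) ∨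
  (∃ L K, Sg.neg s = .withRec L ∧ Sg.neg r = .withRec K ∧
     ∀ p ∈ K, ∃ rj, Prod.snd p = NegTp.name rj ∧
       ∃ sj, L.lookup (Prod.fst p) = some (NegTp.name sj) ∧ N sj rj) ∨
  (∃ t, Sg.neg s = .up (.name t) ∧ TpEmpty Sg t) ∨
  TpFull Sg r

/-- `t ≤ u`: syntactic subtyping between positive type names, interpreted as
circular derivations (greatest fixed point of the subtyping rules). -/
def PosSub (Sg : Signature) (t u : String) : Prop :=
  ∃ P N : String → String → Prop,
    (∀ a b, P a b → PosSubUnf Sg P N a b) ∧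
    (∀ a b, N a b → NegSubUnf Sg P N a b) ∧ P t u

/-- `s ≤ r`: syntactic subtyping between negative type names, interpreted as
circular derivations (greatest fixed point of the subtyping rules). -/
def NegSub (Sg : Signature) (s r : String) : Prop :=
  ∃ P N : String → String → Prop,
    (∀ a b, P a b → PosSubUnf Sg P N a b) ∧
    (∀ a b, N a b → NegSubUnf Sg P N a b) ∧ N s r

end CBPV

namespace CBPV

/-- Structural source-language types (for call-by-name and call-by-value),
with type-name components: functions, eager pairs, unit, variant records and
lazy records. -/
inductive SrcTp : Type where
  | arrow   : String → String → SrcTp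
  | tensor  : String → String → SrcTp
  | one     : SrcTp
  | plus    : List (Label × String) → SrcTp
  | withRec : List (Label × String) → SrcTp

/-- A source-language signature of equirecursive type-name definitions. -/
structure SrcSig : Type where
  def_ : String → SrcTp

end CBPV

namespace CBPV

/-- One unfolding of the rules for call-by-value emptiness `t empty`. -/
def CBVEmptyUnf (S : SrcSig) (E : String → Prop) (t : String) : Prop :=
  (∃ t₁ t₂, S.def_ t = .tensor t₁ t₂ ∧ (E t₁ ∨ E t₂)) ∨
  (∃ L, S.def_ t = .plus L ∧ ∀ p ∈ L, E (Prod.snd p))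

/-- Call-by-value emptiness `t empty` (greatest fixed point of the rules). -/
def CBVEmpty (S : SrcSig) (t : String) : Prop :=
  ∃ E : String → Prop, (∀ a, E a → CBVEmptyUnf S E a) ∧ E t

/-- One unfolding of the rules for call-by-value subtyping `t ≤ u`. -/
def CBVUnf (S : SrcSig) (R : String → String → Prop) (t u : String) : Prop :=
  (∃ t₁ t₂ u₁ u₂, S.def_ t = .arrow t₁ t₂ ∧ S.def_ u = .arrow u₁ u₂ ∧
     R u₁ t₁ ∧ R t₂ u₂) ∨
  (∃ t₁ t₂ u₁ u₂, S.def_ t = .tensor t₁ t₂ ∧ S.def_ u = .tensor u₁ u₂ ∧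
     R t₁ u₁ ∧ R t₂ u₂) ∨
  (S.def_ t = .one ∧ S.def_ u = .one) ∨
  (∃ L J, S.def_ t = .plus L ∧ S.def_ u = .plus J ∧
     ∀ p ∈ L, (J.lookup (Prod.fst p) = none ∧ CBVEmpty S (Prod.snd p)) ∨
       (∃ uℓ, J.lookup (Prod.fst p) = some uℓ ∧ R (Prod.snd p) uℓ)) ∨
  (∃ L J, S.def_ t = .withRec L ∧ S.def_ u = .withRec J ∧
     ∀ p ∈ J, ∃ tj, L.lookup (Prod.fst p) = some tj ∧ R tj (Prod.snd p)) ∨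
  CBVEmpty S t ∨
  (∃ t₁ t₂ u₁ u₂, S.def_ t = .arrow t₁ t₂ ∧ S.def_ u = .arrow u₁ u₂ ∧
     CBVEmpty S u₁) ∨
  (∃ L u₁ u₂, S.def_ t = .withRec L ∧ S.def_ u = .arrow u₁ u₂ ∧
     CBVEmpty S u₁) ∨
  (∃ t₁ t₂, S.def_ t = .arrow t₁ t₂ ∧ S.def_ u = .withRec [])

/-- Call-by-value subtyping `t ≤ u`, interpreted as circular derivations
(greatest fixed point of the call-by-value subtyping rules). -/
def CBVSub (S : SrcSig) (t u : String) : Prop :=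
  ∃ R : String → String → Prop, (∀ a b, R a b → CBVUnf S R a b) ∧ R t u

/-- Levy's call-by-value translation of types, specified relationally:
`tr t` is the CBPV positive type name `[t]_V`, and the translated signature is
in normal form, with auxiliary type names inserted as needed:
`[τ→σ]_V = ↓([τ]_V → ↑[σ]_V)`, `[τ₁⊗τ₂]_V = [τ₁]_V ⊗ [τ₂]_V`, `[1]_V = 1`,
`[⊕{ℓ:τ_ℓ}]_V = ⊕{ℓ:[τ_ℓ]_V}`, and `[&{ℓ:σ_ℓ}]_V = ↓&{ℓ:↑[σ_ℓ]_V}`. -/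
def CBVTrans (S : SrcSig) (Sg : Signature) (tr : String → String) : Prop :=
  ∀ t : String,
    match S.def_ t with
    | .arrow t₁ t₂ => ∃ n m,
        Sg.pos (tr t) = .down (.name n) ∧
        Sg.neg n = .arrow (.name (tr t₁)) (.name m) ∧
        Sg.neg m = .up (.name (tr t₂))
    | .tensor t₁ t₂ =>
        Sg.pos (tr t) = .tensor (.name (tr t₁)) (.name (tr t₂))
    | .one => Sg.pos (tr t) = .one
    | .plus L =>
        Sg.pos (tr t) = .plus (L.map (fun p => (p.1, PosTp.name (tr p.2))))
    | .withRec L => ∃ (n : String) (M : Label × String → String),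
        Sg.pos (tr t) = .down (.name n) ∧
        Sg.neg n = .withRec (L.map (fun p => (p.1, NegTp.name (M p)))) ∧
        ∀ p ∈ L, Sg.neg (M p) = .up (.name (tr (Prod.snd p)))

end CBPV

/-! Both judgments are greatest fixed points, so both halves are proved by coinduction, pulling a
post-fixed point of the CBPV rules back along the translation. For emptiness, `X ∘ tr` is
CBV-consistent whenever `X` is CBPV-consistent, because `⊗` and `⊕` are translated to themselves.
For subtyping, given a consistent pair `(P, N)`, the relation `P (tr a) (tr b) ∨ a empty` is
CBV-consistent. The positive rules correspond to CBV rules directly; a `↓`-step must be followed two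
layers down, through `→` or `&` and then `↑`. There the `⊥`-rule (`↑t ≤ r` for empty `t`) is
absorbed by the disjunct `a empty`, and the fullness rule yields the CBV rules for empty domains
and for `&{}`. -/

namespace List
variable {α β γ : Type*} [BEq α] [LawfulBEq α]

theorem mem_of_lookup_eq_some {l : List (α × β)} {k : α} {b : β} (h : l.lookup k = some b) :
    (k, b) ∈ l := by
  obtain ⟨l₁, l₂, rfl, -⟩ := lookup_eq_some_iff.mp h
  simp

theorem lookup_map_pair (l : List (α × β)) (f : α × β → γ) (k : α) :
    (l.map fun p => (p.1, f p)).lookup k = (l.lookup k).map fun b => f (k, b) := by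
  induction l with
  | nil => rfl
  | cons p l ih =>
    obtain ⟨a, b⟩ := p
    by_cases h : k = a
    · simp [h]
    · simp [lookup_cons, beq_false_of_ne h, ih]

end List

namespace CBPV

section
variable {S : SrcSig} {Sg : Signature} {tr : String → String}
  {P N : String → String → Prop}

namespace NegSubUnf

theorem up_up {s r t u : String} (hs : Sg.neg s = .up (.name t)) (hr : Sg.neg r = .up (.name u))
    (h : NegSubUnf Sg P N s r) : P t u ∨ TpEmpty Sg t := by
  simp_all [NegSubUnf, TpFull]

theorem arrow_arrow {s r t₁ s₂ u₁ r₂ : String} (hs : Sg.neg s = .arrow (.name t₁) (.name s₂))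
    (hr : Sg.neg r = .arrow (.name u₁) (.name r₂)) (h : NegSubUnf Sg P N s r) :
    (P u₁ t₁ ∧ N s₂ r₂) ∨ TpEmpty Sg u₁ := by
  simp_all [NegSubUnf, TpFull]

theorem withRec_withRec {s r : String} {L K : List (Label × NegTp)} (hs : Sg.neg s = .withRec L)
    (hr : Sg.neg r = .withRec K) (h : NegSubUnf Sg P N s r) :
    ∀ p ∈ K, ∃ rj, p.2 = .name rj ∧ ∃ sj, L.lookup p.1 = some (.name sj) ∧ N sj rj := by
  simp only [NegSubUnf, TpFull, hs, hr] at h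
  rcases h with ⟨_, _, _, _, ⟨⟩, -⟩ | ⟨_, _, ⟨⟩, -⟩ | ⟨_, _, ⟨⟩, ⟨⟩, h⟩ | ⟨_, ⟨⟩, -⟩ |
    ⟨_, _, ⟨⟩, -⟩ | hK
  exacts [h, by simp [NegStr.withRec.inj hK]]

theorem withRec_arrow {s r u₁ r₂ : String} {L : List (Label × NegTp)} (hs : Sg.neg s = .withRec L)
    (hr : Sg.neg r = .arrow (.name u₁) (.name r₂)) (h : NegSubUnf Sg P N s r) :
    TpEmpty Sg u₁ := by
  simp_all [NegSubUnf, TpFull]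

theorem arrow_withRec {s r t₁ s₂ : String} {K : List (Label × NegTp)}
    (hs : Sg.neg s = .arrow (.name t₁) (.name s₂)) (hr : Sg.neg r = .withRec K)
    (h : NegSubUnf Sg P N s r) : K = [] := by
  simp_all [NegSubUnf, TpFull]

end NegSubUnf

namespace CBVTrans

theorem tensor_of_pos (htr : CBVTrans S Sg tr) {a t₁ t₂ : String}
    (h : Sg.pos (tr a) = .tensor (.name t₁) (.name t₂)) :
    ∃ a₁ a₂, S.def_ a = .tensor a₁ a₂ ∧ tr a₁ = t₁ ∧ tr a₂ = t₂ := by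
  have ha := htr a
  split at ha <;> simp_all

theorem one_of_pos (htr : CBVTrans S Sg tr) {a : String} (h : Sg.pos (tr a) = .one) :
    S.def_ a = .one := by
  have ha := htr a
  split at ha <;> simp_all

theorem plus_of_pos (htr : CBVTrans S Sg tr) {a : String} {L' : List (Label × PosTp)}
    (h : Sg.pos (tr a) = .plus L') :
    ∃ L, S.def_ a = .plus L ∧ L' = L.map fun p => (p.1, PosTp.name (tr p.2)) := by
  have ha := htr a
  split at ha <;> simp_all

theorem down_of_pos (htr : CBVTrans S Sg tr) {a s : String} (h : Sg.pos (tr a) = .down (.name s)) :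
    (∃ a₁ a₂ m, S.def_ a = .arrow a₁ a₂ ∧
       Sg.neg s = .arrow (.name (tr a₁)) (.name m) ∧ Sg.neg m = .up (.name (tr a₂))) ∨
    (∃ (L : List (Label × String)) (M : Label × String → String), S.def_ a = .withRec L ∧
       Sg.neg s = .withRec (L.map fun p => (p.1, NegTp.name (M p))) ∧
       ∀ p ∈ L, Sg.neg (M p) = .up (.name (tr p.2))) := by
  have ha := htr a
  split at ha <;> simp_all

end CBVTrans

theorem cbvEmptyUnf_of_emptyUnf (htr : CBVTrans S Sg tr) {X : String → Prop} {a : String}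
    (h : EmptyUnf Sg X (tr a)) : CBVEmptyUnf S (X ∘ tr) a := by
  rcases h with ⟨L', hL', hall⟩ | ⟨t₁, t₂, ht, hX⟩
  · obtain ⟨L, hd, rfl⟩ := htr.plus_of_pos hL'
    refine Or.inr ⟨L, hd, fun p hp => ?_⟩
    obtain ⟨tj, ⟨⟩, hXtj⟩ := hall _ (List.mem_map_of_mem hp)
    exact hXtj
  · obtain ⟨a₁, a₂, hd, rfl, rfl⟩ := htr.tensor_of_pos ht
    exact Or.inl ⟨a₁, a₂, hd, hX⟩

theorem cbvEmpty_of_tpEmpty (htr : CBVTrans S Sg tr) {t : String} (h : TpEmpty Sg (tr t)) :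
    CBVEmpty S t := by
  obtain ⟨X, hX, ht⟩ := h
  exact ⟨X ∘ tr, fun a ha => cbvEmptyUnf_of_emptyUnf htr (hX _ ha), ht⟩

theorem CBVUnf.of_cbvEmpty {R : String → String → Prop} {a b : String} (h : CBVEmpty S a) :
    CBVUnf S R a b :=
  Or.inr <| Or.inr <| Or.inr <| Or.inr <| Or.inr <| Or.inl h

def pullbackSub (S : SrcSig) (tr : String → String) (P : String → String → Prop)
    (a b : String) : Prop :=
  P (tr a) (tr b) ∨ CBVEmpty S a

theorem pullbackSub_of_or_tpEmpty (htr : CBVTrans S Sg tr) {a b : String}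
    (h : P (tr a) (tr b) ∨ TpEmpty Sg (tr a)) : pullbackSub S tr P a b :=
  h.imp_right (cbvEmpty_of_tpEmpty htr)

theorem cbvUnf_of_plus (htr : CBVTrans S Sg tr) {a b : String} {L' K' : List (Label × PosTp)}
    (ha : Sg.pos (tr a) = .plus L') (hb : Sg.pos (tr b) = .plus K')
    (h : ∀ p ∈ L', ∃ tj, p.2 = PosTp.name tj ∧
      (TpEmpty Sg tj ∨ ∃ uj, K'.lookup p.1 = some (PosTp.name uj) ∧ P tj uj)) :
    CBVUnf S (pullbackSub S tr P) a b := by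
  obtain ⟨L, hda, rfl⟩ := htr.plus_of_pos ha
  obtain ⟨K, hdb, rfl⟩ := htr.plus_of_pos hb
  refine Or.inr <| Or.inr <| Or.inr <| Or.inl ⟨L, K, hda, hdb, fun p hp => ?_⟩
  obtain ⟨tj, ⟨⟩, hsub⟩ := h _ (List.mem_map_of_mem hp)
  simp only [List.lookup_map_pair, Option.map_eq_some_iff, PosTp.name.injEq] at hsub
  rcases hsub with hE | ⟨uj, ⟨b', hb', rfl⟩, hP⟩
  · have hE := cbvEmpty_of_tpEmpty htr hE
    cases hK : K.lookup p.1 with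
    | none => exact Or.inl ⟨rfl, hE⟩
    | some uℓ => exact Or.inr ⟨uℓ, rfl, Or.inr hE⟩
  · exact Or.inr ⟨b', hb', Or.inl hP⟩

theorem cbvUnf_of_withRec (htr : CBVTrans S Sg tr)
    (hN : ∀ s r, N s r → NegSubUnf Sg P N s r) {a b s r : String}
    {La Lb : List (Label × String)} {Ma Mb : Label × String → String}
    (hda : S.def_ a = .withRec La) (hdb : S.def_ b = .withRec Lb)
    (hs : Sg.neg s = .withRec (La.map fun p => (p.1, NegTp.name (Ma p))))
    (hr : Sg.neg r = .withRec (Lb.map fun p => (p.1, NegTp.name (Mb p))))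
    (hMa : ∀ p ∈ La, Sg.neg (Ma p) = .up (.name (tr p.2)))
    (hMb : ∀ p ∈ Lb, Sg.neg (Mb p) = .up (.name (tr p.2))) (hsr : N s r) :
    CBVUnf S (pullbackSub S tr P) a b := by
  refine Or.inr <| Or.inr <| Or.inr <| Or.inr <| Or.inl ⟨La, Lb, hda, hdb, fun p hp => ?_⟩
  obtain ⟨_, ⟨⟩, sj, hlookup, hsub⟩ :=
    (hN _ _ hsr).withRec_withRec hs hr _ (List.mem_map_of_mem hp)
  simp only [List.lookup_map_pair, Option.map_eq_some_iff, NegTp.name.injEq] at hlookup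
  obtain ⟨tj, htj, rfl⟩ := hlookup
  have hup := (hN _ _ hsub).up_up (hMa _ (List.mem_of_lookup_eq_some htj)) (hMb p hp)
  exact ⟨tj, htj, pullbackSub_of_or_tpEmpty htr hup⟩

theorem cbvUnf_of_down (htr : CBVTrans S Sg tr)
    (hN : ∀ s r, N s r → NegSubUnf Sg P N s r) {a b s r : String}
    (ha : Sg.pos (tr a) = .down (.name s)) (hb : Sg.pos (tr b) = .down (.name r)) (hsr : N s r) :
    CBVUnf S (pullbackSub S tr P) a b := by
  rcases htr.down_of_pos ha with ⟨a₁, a₂, m, hda, hs, hm⟩ | ⟨La, Ma, hda, hs, hMa⟩ <;>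
    rcases htr.down_of_pos hb with ⟨b₁, b₂, m', hdb, hr, hm'⟩ | ⟨Lb, Mb, hdb, hr, hMb⟩
  · rcases (hN _ _ hsr).arrow_arrow hs hr with ⟨h₁, hmm'⟩ | hE
    · have h₂ := pullbackSub_of_or_tpEmpty htr ((hN _ _ hmm').up_up hm hm')
      exact Or.inl ⟨a₁, a₂, b₁, b₂, hda, hdb, Or.inl h₁, h₂⟩
    · exact Or.inr <| Or.inr <| Or.inr <| Or.inr <| Or.inr <| Or.inr <| Or.inl
        ⟨a₁, a₂, b₁, b₂, hda, hdb, cbvEmpty_of_tpEmpty htr hE⟩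
  · obtain rfl : Lb = [] := List.map_eq_nil_iff.mp ((hN _ _ hsr).arrow_withRec hs hr)
    exact Or.inr <| Or.inr <| Or.inr <| Or.inr <| Or.inr <| Or.inr <| Or.inr <| Or.inr
      ⟨a₁, a₂, hda, hdb⟩
  · exact Or.inr <| Or.inr <| Or.inr <| Or.inr <| Or.inr <| Or.inr <| Or.inr <| Or.inl
      ⟨La, b₁, b₂, hda, hdb, cbvEmpty_of_tpEmpty htr ((hN _ _ hsr).withRec_arrow hs hr)⟩
  · exact cbvUnf_of_withRec htr hN hda hdb hs hr hMa hMb hsr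

theorem cbvUnf_of_posSubUnf (htr : CBVTrans S Sg tr)
    (hN : ∀ s r, N s r → NegSubUnf Sg P N s r) {a b : String}
    (h : PosSubUnf Sg P N (tr a) (tr b)) : CBVUnf S (pullbackSub S tr P) a b := by
  rcases h with ⟨t₁, t₂, u₁, u₂, ha, hb, h₁, h₂⟩ | ⟨ha, hb⟩ | ⟨L', K', ha, hb, hL'⟩ |
    ⟨s, r, ha, hb, hsr⟩ | hE
  · obtain ⟨a₁, a₂, hda, rfl, rfl⟩ := htr.tensor_of_pos ha
    obtain ⟨b₁, b₂, hdb, rfl, rfl⟩ := htr.tensor_of_pos hb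
    exact Or.inr <| Or.inl ⟨a₁, a₂, b₁, b₂, hda, hdb, Or.inl h₁, Or.inl h₂⟩
  · exact Or.inr <| Or.inr <| Or.inl ⟨htr.one_of_pos ha, htr.one_of_pos hb⟩
  · exact cbvUnf_of_plus htr ha hb hL'
  · exact cbvUnf_of_down htr hN ha hb hsr
  · exact CBVUnf.of_cbvEmpty (cbvEmpty_of_tpEmpty htr hE)

end

/-- Soundness of polarized subtyping for call-by-value: for call-by-value type
names `t`, `u` and their Levy translations `[t]_V`, `[u]_V` into positive
CBPV type names,
(1) if `[t]_V empty` (CBPV emptiness) then `t empty` (CBV emptiness), and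
(2) if `[t]_V ≤ [u]_V` (CBPV positive subtyping) then `t ≤ u` (CBV subtyping). -/
theorem cbv_subtyping_sound (S : SrcSig) (Sg : Signature)
    (tr : String → String) (htr : CBVTrans S Sg tr) :
    (∀ t : String, TpEmpty Sg (tr t) → CBVEmpty S t) ∧
    (∀ t u : String, PosSub Sg (tr t) (tr u) → CBVSub S t u) := by
  refine ⟨fun t => cbvEmpty_of_tpEmpty htr, ?_⟩
  rintro t u ⟨P, N, hP, hN, htu⟩
  refine ⟨pullbackSub S tr P, ?_, Or.inl htu⟩
  rintro a b (hab | hE)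
  · exact cbvUnf_of_posSubUnf htr hN (hP _ _ hab)
  · exact CBVUnf.of_cbvEmpty hE

end CBPV
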